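/- Let Ψ be a generalized eigenfunction of the extended CMV operator ℰ with ℰΨ = zΨ, and let |β| = |γ| = 1. Then for a < x < b, the Poisson formula holds: Ψ(x) = -G^{β,γ}_{[a,b],z}(x,a)·B_a - G^{β,γ}_{[a,b],z}(x,b)·B_b, where B_a = Ψ(a)(z·conj(β) - z·conj(α_{a-1})) + Ψ(a-1)·z·ρ_{a-1} if a is odd and B_a = Ψ(a)(α_{a-1} - β) - Ψ(a-1)·ρ_{a-1} if a is even, and B_b = Ψ(b)(conj(γ) - conj(α_b)) - Ψ(b+1)·ρ_b if b is odd and B_b = Ψ(b)(zα_b - zγ) + Ψ(b+1)·z·ρ_b if b is even. -/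

import Mathlib

open Complex BigOperators
open scoped Classical

/-- ρ_n = sqrt(1 - |α_n|²). -/
noncomputable def rho (α : ℤ → ℂ) (n : ℤ) : ℝ := Real.sqrt (1 - ‖α n‖ ^ 2)

/-- 𝓛 = ⊕_{n even} Θ_n as an infinite matrix on ℤ, where
Θ_n = [[conj α_n, ρ_n],[ρ_n, -α_n]] acts on coordinates {n, n+1}. -/
noncomputable def Lmat (α : ℤ → ℂ) (j k : ℤ) : ℂ :=
  if Even j then
    if k = j then (starRingEnd ℂ) (α j) else if k = j + 1 then (rho α j : ℂ) else 0
  else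
    if k = j then -α (j - 1) else if k = j - 1 then (rho α (j - 1) : ℂ) else 0

/-- 𝓜 = ⊕_{n odd} Θ_n as an infinite matrix on ℤ. -/
noncomputable def Mmat (α : ℤ → ℂ) (j k : ℤ) : ℂ :=
  if Odd j then
    if k = j then (starRingEnd ℂ) (α j) else if k = j + 1 then (rho α j : ℂ) else 0
  else
    if k = j then -α (j - 1) else if k = j - 1 then (rho α (j - 1) : ℂ) else 0

/-- The tridiagonal matrix S_z = z·𝓛* − 𝓜 (entries). -/
noncomputable def Amat (α : ℤ → ℂ) (z : ℂ) (j k : ℤ) : ℂ :=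
  z * (starRingEnd ℂ) (Lmat α k j) - Mmat α j k

/-- The extended CMV matrix ℰ in its five-diagonal form (eq. (2.2) of the paper). -/
noncomputable def Ecmv (α : ℤ → ℂ) (j k : ℤ) : ℂ :=
  if Even j then
    if k = j - 1 then (starRingEnd ℂ) (α j) * (rho α (j - 1) : ℂ)
    else if k = j then -((starRingEnd ℂ) (α j)) * α (j - 1)
    else if k = j + 1 then (rho α j : ℂ) * (starRingEnd ℂ) (α (j + 1))
    else if k = j + 2 then (rho α j : ℂ) * (rho α (j + 1) : ℂ)
    else 0
  else
    if k = j - 2 then (rho α (j - 1) : ℂ) * (rho α (j - 2) : ℂ)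
    else if k = j - 1 then -(rho α (j - 1) : ℂ) * α (j - 2)
    else if k = j then -α (j - 1) * (starRingEnd ℂ) (α j)
    else if k = j + 1 then -α (j - 1) * (rho α j : ℂ)
    else 0

/-- Verblunsky coefficients with modified boundary conditions α_{a-1} = β, α_b = γ. -/
noncomputable def modAlpha (α : ℤ → ℂ) (a b : ℤ) (β γ : ℂ) : ℤ → ℂ :=
  Function.update (Function.update α (a - 1) β) b γ

/-- Determinant of the restriction of an infinite matrix to the window [a,b]. -/
noncomputable def detIcc (A : ℤ → ℤ → ℂ) (a b : ℤ) : ℂ :=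
  Matrix.det (Matrix.of fun i j : ↥(Finset.Icc a b) => A i.1 j.1)

/-- 𝒫_{[a,b],z} = det(z·𝓛* − 𝓜) restricted to [a,b], built from coefficients αm. -/
noncomputable def Pdet (αm : ℤ → ℂ) (a b : ℤ) (z : ℂ) : ℂ :=
  detIcc (Amat αm z) a b

/-- The ρ-normalized determinant P_{[a,b],z} = (ρ_{a-1}⋯ρ_b)^{-1} 𝒫_{[a,b],z};
the ρ's are taken from the unmodified coefficients α while the determinant is
built from the (possibly boundary-modified) coefficients αm. -/
noncomputable def Pnorm (α αm : ℤ → ℂ) (a b : ℤ) (z : ℂ) : ℂ :=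
  ((∏ k ∈ Finset.Icc (a - 1) b, rho α k : ℝ) : ℂ)⁻¹ * Pdet αm a b z

/-!
Since `ℰ = 𝓛𝓜` with `𝓛` unitary, `ℰΨ = zΨ` is the three-term recurrence `(z𝓛* - 𝓜)Ψ = 0`.
Apply the left inverse `G` of the window matrix `A = z(𝓛^{β,γ}_{[a,b]})* - 𝓜^{β,γ}_{[a,b]}` to
`AΨ` on `[a, b]`. On interior rows `A` agrees with the unmodified matrix, so `AΨ` vanishes there;
on the rows `a` and `b` it equals `-B_a` and `-B_b`, the defect coming from the boundary
coefficients `β, γ` and from the entries in columns `a - 1`, `b + 1` that the window cuts off.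
-/

open Finset

theorem apply_eq_sum_mul_sum_of_leftInverse {ι R : Type*} [DecidableEq ι] [Semiring R]
    {s : Finset ι} {A G : ι → ι → R} (u : ι → R)
    (hGA : ∀ j ∈ s, ∀ k ∈ s, ∑ i ∈ s, G j i * A i k = if j = k then 1 else 0)
    {x : ι} (hx : x ∈ s) :
    u x = ∑ i ∈ s, G x i * ∑ j ∈ s, A i j * u j := by
  simp_rw [mul_sum, ← mul_assoc]
  rw [sum_comm]
  simp_rw [← sum_mul]
  rw [sum_congr rfl fun j hj => by rw [hGA x hx j hj]]
  simp [hx]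

theorem apply_eq_boundary_of_leftInverse {R : Type*} [Semiring R] {A G : ℤ → ℤ → R}
    {u : ℤ → R} {a b x : ℤ}
    (hGA : ∀ j ∈ Icc a b, ∀ k ∈ Icc a b, ∑ i ∈ Icc a b, G j i * A i k = if j = k then 1 else 0)
    (hax : a < x) (hxb : x < b)
    (hu : ∀ i, a < i → i < b → ∑ j ∈ Icc a b, A i j * u j = 0) :
    u x = G x a * ∑ j ∈ Icc a b, A a j * u j + G x b * ∑ j ∈ Icc a b, A b j * u j := by
  rw [apply_eq_sum_mul_sum_of_leftInverse u hGA (mem_Icc.2 ⟨hax.le, hxb.le⟩),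
    ← sum_subset (s₁ := {a, b}) (by intro i; simp; omega) fun i hi hab => by
      simp only [mem_Icc, mem_insert, mem_singleton, not_or] at hi hab
      rw [hu i (by omega) (by omega), mul_zero],
    sum_pair (by omega)]

theorem ofReal_rho_sq {α : ℤ → ℂ} {n : ℤ} (h : ‖α n‖ ≤ 1) :
    (rho α n : ℂ) ^ 2 = 1 - starRingEnd ℂ (α n) * α n := by
  have : rho α n ^ 2 = 1 - ‖α n‖ ^ 2 := Real.sq_sqrt (by nlinarith [norm_nonneg (α n)])
  rw [Complex.conj_mul', ← Complex.ofReal_pow, this]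
  push_cast
  ring

section Entries

variable (α : ℤ → ℂ) (z : ℂ)

theorem Amat_eq_zero {j k : ℤ} (h : k < j - 1 ∨ j + 1 < k) : Amat α z j k = 0 := by
  simp only [Amat, Lmat, Mmat]
  split_ifs <;> first | omega | simp

theorem Amat_congr_row {α' : ℤ → ℂ} {j : ℤ} (h₁ : α (j - 1) = α' (j - 1)) (h₂ : α j = α' j)
    (k : ℤ) : Amat α z j k = Amat α' z j k := by
  simp only [Amat, Lmat, Mmat, rho]
  split_ifs <;> (try omega) <;> subst_vars <;>
    (try simp only [add_sub_cancel_right] at *) <;> simp only [h₁, h₂]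

theorem Amat_self_of_even {n : ℤ} (hn : Even n) : Amat α z n n = z * α n + α (n - 1) := by
  rw [Int.even_iff] at hn
  simp only [Amat, Lmat, Mmat, Int.even_iff, Int.odd_iff]
  split_ifs <;> first | omega | simp

theorem Amat_sub_one_of_even {n : ℤ} (hn : Even n) :
    Amat α z n (n - 1) = -(rho α (n - 1) : ℂ) := by
  rw [Int.even_iff] at hn
  simp only [Amat, Lmat, Mmat, Int.even_iff, Int.odd_iff]
  split_ifs <;> first | omega | simp

theorem Amat_add_one_of_even {n : ℤ} (hn : Even n) :
    Amat α z n (n + 1) = z * (rho α n : ℂ) := by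
  rw [Int.even_iff] at hn
  simp only [Amat, Lmat, Mmat, Int.even_iff, Int.odd_iff]
  split_ifs <;> first | omega | simp

theorem Amat_self_of_odd {n : ℤ} (hn : Odd n) :
    Amat α z n n = -(z * starRingEnd ℂ (α (n - 1))) - starRingEnd ℂ (α n) := by
  rw [Int.odd_iff] at hn
  simp only [Amat, Lmat, Mmat, Int.even_iff, Int.odd_iff]
  split_ifs <;> first | omega | simp

theorem Amat_sub_one_of_odd {n : ℤ} (hn : Odd n) :
    Amat α z n (n - 1) = z * (rho α (n - 1) : ℂ) := by
  rw [Int.odd_iff] at hn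
  simp only [Amat, Lmat, Mmat, Int.even_iff, Int.odd_iff]
  split_ifs <;> first | omega | simp

theorem Amat_add_one_of_odd {n : ℤ} (hn : Odd n) :
    Amat α z n (n + 1) = -(rho α n : ℂ) := by
  rw [Int.odd_iff] at hn
  simp only [Amat, Lmat, Mmat, Int.even_iff, Int.odd_iff]
  split_ifs <;> first | omega | simp

theorem Ecmv_eq_zero {j k : ℤ} (h : k < j - 2 ∨ j + 2 < k) : Ecmv α j k = 0 := by
  simp only [Ecmv]
  split_ifs <;> first | omega | rfl

end Entries

section Eigenfunction

variable (α : ℤ → ℂ) (z : ℂ) (Ψ : ℤ → ℂ)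

theorem tsum_Ecmv_mul (n : ℤ) :
    ∑' k, Ecmv α n k * Ψ k = Ecmv α n (n - 2) * Ψ (n - 2) + Ecmv α n (n - 1) * Ψ (n - 1) +
      Ecmv α n n * Ψ n + Ecmv α n (n + 1) * Ψ (n + 1) + Ecmv α n (n + 2) * Ψ (n + 2) := by
  rw [tsum_eq_sum (s := {n - 2, n - 1, n, n + 1, n + 2}) fun k hk => by
    simp only [mem_insert, mem_singleton, not_or] at hk
    rw [Ecmv_eq_zero α (by omega), zero_mul]]
  simp (disch := simp only [mem_insert, mem_singleton]; omega) only [sum_insert, sum_singleton]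
  ring

theorem tsum_Ecmv_mul_of_even {n : ℤ} (hn : Even n) :
    ∑' k, Ecmv α n k * Ψ k =
      starRingEnd ℂ (α n) * rho α (n - 1) * Ψ (n - 1)
        - starRingEnd ℂ (α n) * α (n - 1) * Ψ n
        + rho α n * starRingEnd ℂ (α (n + 1)) * Ψ (n + 1)
        + rho α n * rho α (n + 1) * Ψ (n + 2) := by
  rw [Int.even_iff] at hn
  rw [tsum_Ecmv_mul]
  simp (disch := omega) only [Ecmv, Int.even_iff, if_pos, if_neg, if_true]
  ring

theorem tsum_Ecmv_mul_of_odd {n : ℤ} (hn : Odd n) :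
    ∑' k, Ecmv α n k * Ψ k =
      rho α (n - 1) * rho α (n - 2) * Ψ (n - 2)
        - rho α (n - 1) * α (n - 2) * Ψ (n - 1)
        - α (n - 1) * starRingEnd ℂ (α n) * Ψ n
        - α (n - 1) * rho α n * Ψ (n + 1) := by
  rw [Int.odd_iff] at hn
  rw [tsum_Ecmv_mul]
  simp (disch := omega) only [Ecmv, Int.even_iff, if_pos, if_neg, if_true]
  ring

/-- Row `n` of `𝓛*(ℰ - z) = 𝓜 - z𝓛*` combines rows `n, n + 1` (`n` even) or `n - 1, n`
(`n` odd) of `ℰ - z`; the combination collapses because `ρ² = 1 - |α|²`. -/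
theorem Amat_row_eq_zero (hα : ∀ n, ‖α n‖ ≤ 1)
    (hΨ : ∀ n, ∑' k, Ecmv α n k * Ψ k = z * Ψ n) (n : ℤ) :
    Amat α z n (n - 1) * Ψ (n - 1) + Amat α z n n * Ψ n + Amat α z n (n + 1) * Ψ (n + 1) = 0 := by
  rcases Int.even_or_odd n with hn | hn
  · have row := tsum_Ecmv_mul_of_even α Ψ hn
    have row_succ := tsum_Ecmv_mul_of_odd α Ψ hn.add_one
    rw [hΨ] at row row_succ
    rw [add_sub_cancel_right, show n + 1 - 2 = n - 1 by ring, show n + 1 + 1 = n + 2 by ring]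
      at row_succ
    rw [Amat_sub_one_of_even α z hn, Amat_self_of_even α z hn, Amat_add_one_of_even α z hn]
    linear_combination α n * row + (rho α n : ℂ) * row_succ +
      ((rho α (n - 1) : ℂ) * Ψ (n - 1) - α (n - 1) * Ψ n) * ofReal_rho_sq (hα n)
  · have row_pred := tsum_Ecmv_mul_of_even α Ψ (Int.even_sub_one.2 (Int.not_even_iff_odd.2 hn))
    have row := tsum_Ecmv_mul_of_odd α Ψ hn
    rw [hΨ] at row row_pred
    rw [sub_add_cancel, show n - 1 - 1 = n - 2 by ring, show n - 1 + 2 = n + 1 by ring] at row_pred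
    rw [Amat_sub_one_of_odd α z hn, Amat_self_of_odd α z hn, Amat_add_one_of_odd α z hn]
    linear_combination (rho α (n - 1) : ℂ) * row_pred - starRingEnd ℂ (α (n - 1)) * row +
      (starRingEnd ℂ (α n) * Ψ n + (rho α n : ℂ) * Ψ (n + 1)) * ofReal_rho_sq (hα (n - 1))

end Eigenfunction

section Window

variable {α : ℤ → ℂ} {a b : ℤ} {β γ : ℂ}

theorem modAlpha_apply_of_ne {m : ℤ} (h₁ : m ≠ a - 1) (h₂ : m ≠ b) :
    modAlpha α a b β γ m = α m := by
  rw [modAlpha, Function.update_of_ne h₂, Function.update_of_ne h₁]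

theorem modAlpha_apply_sub_one (h : a - 1 ≠ b) : modAlpha α a b β γ (a - 1) = β := by
  rw [modAlpha, Function.update_of_ne h, Function.update_self]

theorem modAlpha_apply_right : modAlpha α a b β γ b = γ := by
  rw [modAlpha, Function.update_self]

theorem rho_modAlpha_of_ne {m : ℤ} (h₁ : m ≠ a - 1) (h₂ : m ≠ b) :
    rho (modAlpha α a b β γ) m = rho α m := by
  rw [rho, modAlpha_apply_of_ne h₁ h₂, rho]

theorem Amat_modAlpha_of_lt_of_lt (z : ℂ) {i : ℤ} (hai : a < i) (hib : i < b) :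
    Amat (modAlpha α a b β γ) z i = Amat α z i :=
  funext <| Amat_congr_row _ z (modAlpha_apply_of_ne (by omega) (by omega))
    (modAlpha_apply_of_ne (by omega) (by omega))

variable (α) (z : ℂ) (u : ℤ → ℂ)

theorem sum_Icc_Amat_mul_eq_sum_of_subset {i : ℤ} {s : Finset ℤ} (hs : s ⊆ Icc a b)
    (hband : ∀ j ∈ Icc a b, j ∉ s → j < i - 1 ∨ i + 1 < j) :
    ∑ j ∈ Icc a b, Amat α z i j * u j = ∑ j ∈ s, Amat α z i j * u j :=
  (sum_subset hs fun j hj hjs => by rw [Amat_eq_zero α z (hband j hj hjs), zero_mul]).symm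

theorem sum_Icc_Amat_mul_of_lt_of_lt {i : ℤ} (hai : a < i) (hib : i < b) :
    ∑ j ∈ Icc a b, Amat α z i j * u j =
      Amat α z i (i - 1) * u (i - 1) + Amat α z i i * u i + Amat α z i (i + 1) * u (i + 1) := by
  rw [sum_Icc_Amat_mul_eq_sum_of_subset α z u (s := {i - 1, i, i + 1})
    (by intro j; simp only [mem_insert, mem_singleton, mem_Icc]; omega)
    (by intro j; simp only [mem_insert, mem_singleton, mem_Icc]; omega),
    sum_insert (by simp only [mem_insert, mem_singleton]; omega), sum_pair (by omega), add_assoc]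

theorem sum_Icc_Amat_mul_left (hab : a < b) :
    ∑ j ∈ Icc a b, Amat α z a j * u j = Amat α z a a * u a + Amat α z a (a + 1) * u (a + 1) := by
  rw [sum_Icc_Amat_mul_eq_sum_of_subset α z u (s := {a, a + 1})
    (by intro j; simp only [mem_insert, mem_singleton, mem_Icc]; omega)
    (by intro j; simp only [mem_insert, mem_singleton, mem_Icc]; omega), sum_pair (by omega)]

theorem sum_Icc_Amat_mul_right (hab : a < b) :
    ∑ j ∈ Icc a b, Amat α z b j * u j = Amat α z b (b - 1) * u (b - 1) + Amat α z b b * u b := by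
  rw [sum_Icc_Amat_mul_eq_sum_of_subset α z u (s := {b - 1, b})
    (by intro j; simp only [mem_insert, mem_singleton, mem_Icc]; omega)
    (by intro j; simp only [mem_insert, mem_singleton, mem_Icc]; omega), sum_pair (by omega)]

variable {z} {Ψ : ℤ → ℂ}

theorem sum_Icc_Amat_modAlpha_mul_left (hα : ∀ n, ‖α n‖ ≤ 1)
    (hΨ : ∀ n, ∑' k, Ecmv α n k * Ψ k = z * Ψ n) (hab : a < b) :
    ∑ j ∈ Icc a b, Amat (modAlpha α a b β γ) z a j * Ψ j =
      -(if Odd a then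
          Ψ a * (z * starRingEnd ℂ β - z * starRingEnd ℂ (α (a - 1))) +
            Ψ (a - 1) * z * (rho α (a - 1) : ℂ)
        else
          Ψ a * (α (a - 1) - β) - Ψ (a - 1) * (rho α (a - 1) : ℂ)) := by
  have row := Amat_row_eq_zero α z Ψ hα hΨ a
  have hα_a : modAlpha α a b β γ a = α a := modAlpha_apply_of_ne (by omega) (by omega)
  have hρ_a : rho (modAlpha α a b β γ) a = rho α a := rho_modAlpha_of_ne (by omega) (by omega)
  have hβ : modAlpha α a b β γ (a - 1) = β := modAlpha_apply_sub_one (by omega)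
  rw [sum_Icc_Amat_mul_left _ z Ψ hab]
  rcases Int.even_or_odd a with ha | ha
  · rw [if_neg (Int.not_odd_iff_even.2 ha), Amat_self_of_even _ z ha, Amat_add_one_of_even _ z ha,
      hα_a, hρ_a, hβ]
    rw [Amat_sub_one_of_even α z ha, Amat_self_of_even α z ha, Amat_add_one_of_even α z ha] at row
    linear_combination row
  · rw [if_pos ha, Amat_self_of_odd _ z ha, Amat_add_one_of_odd _ z ha, hα_a, hρ_a, hβ]
    rw [Amat_sub_one_of_odd α z ha, Amat_self_of_odd α z ha, Amat_add_one_of_odd α z ha] at row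
    linear_combination row

theorem sum_Icc_Amat_modAlpha_mul_right (hα : ∀ n, ‖α n‖ ≤ 1)
    (hΨ : ∀ n, ∑' k, Ecmv α n k * Ψ k = z * Ψ n) (hab : a < b) :
    ∑ j ∈ Icc a b, Amat (modAlpha α a b β γ) z b j * Ψ j =
      -(if Odd b then
          Ψ b * (-starRingEnd ℂ (α b) + starRingEnd ℂ γ) - Ψ (b + 1) * (rho α b : ℂ)
        else
          Ψ b * (z * α b - z * γ) + Ψ (b + 1) * z * (rho α b : ℂ)) := by
  have row := Amat_row_eq_zero α z Ψ hα hΨ b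
  have hα_b : modAlpha α a b β γ (b - 1) = α (b - 1) := modAlpha_apply_of_ne (by omega) (by omega)
  have hρ_b : rho (modAlpha α a b β γ) (b - 1) = rho α (b - 1) :=
    rho_modAlpha_of_ne (by omega) (by omega)
  have hγ : modAlpha α a b β γ b = γ := modAlpha_apply_right
  rw [sum_Icc_Amat_mul_right _ z Ψ hab]
  rcases Int.even_or_odd b with hb | hb
  · rw [if_neg (Int.not_odd_iff_even.2 hb), Amat_self_of_even _ z hb, Amat_sub_one_of_even _ z hb,
      hα_b, hρ_b, hγ]
    rw [Amat_sub_one_of_even α z hb, Amat_self_of_even α z hb, Amat_add_one_of_even α z hb] at row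
    linear_combination row
  · rw [if_pos hb, Amat_self_of_odd _ z hb, Amat_sub_one_of_odd _ z hb, hα_b, hρ_b, hγ]
    rw [Amat_sub_one_of_odd α z hb, Amat_self_of_odd α z hb, Amat_add_one_of_odd α z hb] at row
    linear_combination row

theorem sum_Icc_Amat_modAlpha_mul_of_lt_of_lt (hα : ∀ n, ‖α n‖ ≤ 1)
    (hΨ : ∀ n, ∑' k, Ecmv α n k * Ψ k = z * Ψ n) {i : ℤ} (hai : a < i) (hib : i < b) :
    ∑ j ∈ Icc a b, Amat (modAlpha α a b β γ) z i j * Ψ j = 0 := by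
  rw [Amat_modAlpha_of_lt_of_lt z hai hib, sum_Icc_Amat_mul_of_lt_of_lt α z Ψ hai hib]
  exact Amat_row_eq_zero α z Ψ hα hΨ i

end Window

theorem poisson_formula_general (α : ℤ → ℂ) (hα : ∀ n, ‖α n‖ < 1)
    (β γ : ℂ) (z : ℂ)
    (a b x : ℤ) (hax : a < x) (hxb : x < b)
    (Ψ : ℤ → ℂ) (hΨ : ∀ n : ℤ, ∑' k : ℤ, Ecmv α n k * Ψ k = z * Ψ n)
    (G : ℤ → ℤ → ℂ)
    (hG₂ : ∀ j ∈ Finset.Icc a b, ∀ k ∈ Finset.Icc a b,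
      (∑ i ∈ Finset.Icc a b, G j i * Amat (modAlpha α a b β γ) z i k) =
        if j = k then 1 else 0) :
    Ψ x =
      -(G x a) *
        (if Odd a then
          Ψ a * (z * (starRingEnd ℂ) β - z * (starRingEnd ℂ) (α (a - 1))) +
            Ψ (a - 1) * z * (rho α (a - 1) : ℂ)
        else
          Ψ a * (α (a - 1) - β) - Ψ (a - 1) * (rho α (a - 1) : ℂ)) -
      (G x b) *
        (if Odd b then
          Ψ b * (-(starRingEnd ℂ) (α b) + (starRingEnd ℂ) γ) -
            Ψ (b + 1) * (rho α b : ℂ)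
        else
          Ψ b * (z * α b - z * γ) + Ψ (b + 1) * z * (rho α b : ℂ)) := by
  have hα' : ∀ n, ‖α n‖ ≤ 1 := fun n => (hα n).le
  have hab : a < b := hax.trans hxb
  rw [apply_eq_boundary_of_leftInverse hG₂ hax hxb fun i hai hib =>
      sum_Icc_Amat_modAlpha_mul_of_lt_of_lt α hα' hΨ hai hib,
    sum_Icc_Amat_modAlpha_mul_left α hα' hΨ hab, sum_Icc_Amat_modAlpha_mul_right α hα' hΨ hab]
  ring

/-- Poisson formula: If ℰΨ = zΨ, |β| = |γ| = 1, and G is the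
Green's function, i.e. the inverse of A^{β,γ}_{[a,b],z} = z(𝓛^{β,γ}_{[a,b]})* − 𝓜^{β,γ}_{[a,b]},
then for a < x < b,
Ψ(x) = -G(x,a)·B_a - G(x,b)·B_b with the boundary terms B_a, B_b below. -/
theorem poisson_formula (α : ℤ → ℂ) (hα : ∀ n, ‖α n‖ < 1)
    (β γ : ℂ) (hβ : ‖β‖ = 1) (hγ : ‖γ‖ = 1) (z : ℂ)
    (a b x : ℤ) (hax : a < x) (hxb : x < b)
    (Ψ : ℤ → ℂ) (hΨ : ∀ n : ℤ, ∑' k : ℤ, Ecmv α n k * Ψ k = z * Ψ n)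
    (G : ℤ → ℤ → ℂ)
    (hG₁ : ∀ j ∈ Finset.Icc a b, ∀ k ∈ Finset.Icc a b,
      (∑ i ∈ Finset.Icc a b, Amat (modAlpha α a b β γ) z j i * G i k) =
        if j = k then 1 else 0)
    (hG₂ : ∀ j ∈ Finset.Icc a b, ∀ k ∈ Finset.Icc a b,
      (∑ i ∈ Finset.Icc a b, G j i * Amat (modAlpha α a b β γ) z i k) =
        if j = k then 1 else 0) :
    Ψ x =
      -(G x a) *
        (if Odd a then
          Ψ a * (z * (starRingEnd ℂ) β - z * (starRingEnd ℂ) (α (a - 1))) +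
            Ψ (a - 1) * z * (rho α (a - 1) : ℂ)
        else
          Ψ a * (α (a - 1) - β) - Ψ (a - 1) * (rho α (a - 1) : ℂ)) -
      (G x b) *
        (if Odd b then
          Ψ b * (-(starRingEnd ℂ) (α b) + (starRingEnd ℂ) γ) -
            Ψ (b + 1) * (rho α b : ℂ)
        else
          Ψ b * (z * α b - z * γ) + Ψ (b + 1) * z * (rho α b : ℂ)) :=
  poisson_formula_general α hα β γ z a b x hax hxb Ψ hΨ G hG₂
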